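/- For every nonnegative integer L and every integer a, with T₀⟨m; q | a⟩ := q^{(m²-a²)/2} · ⟨m; a; 1/q | a⟩₂ (the round q-trinomial with base 1/q), one has Σ_{i≥0} q^{i²/2} [L choose i]_q T₀⟨i; q | a⟩ = q^{a²/2} [2L choose L-a]_q. -/
import Mathlib


open Finset

/-- The Gaussian binomial coefficient `[n choose k]_Q` in base `Q`,
defined by the q-Pascal recurrence; it vanishes for `k > n`. -/
def gaussBinom {K : Type*} [Field K] (Q : K) : ℕ → ℕ → K
  | _, 0 => 1
  | 0, _ + 1 => 0
  | n + 1, k + 1 => gaussBinom Q n k + Q ^ (k + 1) * gaussBinom Q n (k + 1)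

/-- `[n choose j]_Q` with an integer lower entry: zero when `j < 0`. -/
def gaussBinomZ {K : Type*} [Field K] (Q : K) (n : ℕ) (j : ℤ) : K :=
  if 0 ≤ j then gaussBinom Q n j.toNat else 0

/-- The round q-trinomial coefficient
`⟨m; b; Q | a⟩₂ = Σ_{k≥0} Q^{k(k+b)} [m choose k]_Q [m-k choose k+a]_Q`
(terms with `k + a < 0` vanish since the second Gaussian binomial is zero). -/
def qTrinom {K : Type*} [Field K] (Q : K) (m : ℕ) (b a : ℤ) : K :=
  ∑ k ∈ range (m + 1),
    if 0 ≤ (k : ℤ) + a then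
      Q ^ ((k : ℤ) * ((k : ℤ) + b)) * gaussBinom Q m k *
        gaussBinom Q (m - k) (((k : ℤ) + a).toNat)
    else 0

/-- `T₀⟨m; q² | a⟩ = (q²)^{(m²-a²)/2} ⟨m; a; (q²)⁻¹ | a⟩₂`, i.e. with `q` replaced by `q²`
throughout to avoid half-integer powers of `q`. -/
def T0 {K : Type*} [Field K] (q : K) (m : ℕ) (a : ℤ) : K :=
  q ^ ((m : ℤ) ^ 2 - a ^ 2) * qTrinom ((q ^ 2)⁻¹) m a a

section WarnaarProof

variable {K : Type*} [Field K]

lemma gb_zero_right (Q : K) (n : ℕ) : gaussBinom Q n 0 = 1 := by cases n <;> rfl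

lemma gb_succ_succ (Q : K) (n k : ℕ) :
    gaussBinom Q (n+1) (k+1) = gaussBinom Q n k + Q ^ (k+1) * gaussBinom Q n (k+1) := rfl

lemma gb_eq_zero (Q : K) : ∀ n k : ℕ, n < k → gaussBinom Q n k = 0 := by
  intro n
  induction n with
  | zero =>
    intro k hk
    match k, hk with
    | k+1, _ => rfl
  | succ n ih =>
    intro k hk
    match k, hk with
    | k+1, hk =>
      rw [gb_succ_succ, ih k (by omega), ih (k+1) (by omega)]
      ring

lemma gb_absorb (Q : K) : ∀ n k : ℕ,
    (1 - Q ^ (k+1)) * gaussBinom Q n (k+1) = (1 - Q ^ (n - k)) * gaussBinom Q n k := by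
  intro n
  induction n with
  | zero =>
    intro k
    rw [gb_eq_zero Q 0 (k+1) (by omega)]
    simp [Nat.zero_sub]
  | succ n ih =>
    intro k
    by_cases hk : k ≤ n
    · obtain ⟨d, rfl⟩ : ∃ d, n = k + d := ⟨n - k, by omega⟩
      cases k with
      | zero =>
        simp only [Nat.zero_add] at *
        have h0 := ih 0
        rw [Nat.sub_zero, gb_zero_right] at h0
        rw [gb_succ_succ, gb_zero_right, gb_zero_right, Nat.sub_zero]
        linear_combination Q * h0
      | succ j =>
        have hij := ih j
        have hik := ih (j+1)
        rw [show j + 1 + d - j = d + 1 by omega] at hij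
        rw [show j + 1 + d - (j+1) = d by omega] at hik
        rw [gb_succ_succ, gb_succ_succ,
          show j + 1 + d + 1 - (j + 1) = d + 1 by omega]
        linear_combination Q^(j+2) * hik + hij
    · rw [gb_eq_zero Q (n+1) (k+1) (by omega), Nat.sub_eq_zero_of_le (by omega)]
      simp

lemma gb_pascal2 (Q : K) (n k : ℕ) :
    gaussBinom Q (n+1) (k+1) = Q ^ (n-k) * gaussBinom Q n k + gaussBinom Q n (k+1) := by
  have h := gb_absorb Q n k
  rw [gb_succ_succ]
  linear_combination -h

lemma gb_absorbC (Q : K) (n k : ℕ) :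
    (1 - Q ^ (k+1)) * gaussBinom Q (n+1) (k+1) = (1 - Q ^ (n+1)) * gaussBinom Q n k := by
  by_cases hk : k ≤ n
  · obtain ⟨d, rfl⟩ : ∃ d, n = k + d := ⟨n - k, by omega⟩
    have h := gb_absorb Q (k+d) k
    rw [show k + d - k = d by omega] at h
    rw [gb_succ_succ]
    linear_combination Q^(k+1) * h
  · rw [gb_eq_zero Q (n+1) (k+1) (by omega), gb_eq_zero Q n k (by omega)]
    simp

-- gaussBinomZ lemmas
lemma gaussBinomZ_of_neg (Q : K) (n : ℕ) {j : ℤ} (h : j < 0) : gaussBinomZ Q n j = 0 := if_neg (by omega)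

lemma gaussBinomZ_eq_gb (Q : K) (n : ℕ) {j : ℤ} {k : ℕ} (h : j = (k:ℤ)) :
    gaussBinomZ Q n j = gaussBinom Q n k := by
  rw [gaussBinomZ, if_pos (by omega)]
  congr 1
  omega

lemma gaussBinomZ_eq_zero (Q : K) {n : ℕ} {j : ℤ} (h : (n:ℤ) < j) : gaussBinomZ Q n j = 0 := by
  rw [gaussBinomZ, if_pos (by omega), gb_eq_zero Q n j.toNat (by omega)]

lemma gaussBinomZ_pascal1 (Q : K) (hQ : Q ≠ 0) (n : ℕ) (j : ℤ) :
    gaussBinomZ Q (n+1) j = gaussBinomZ Q n (j-1) + Q ^ j * gaussBinomZ Q n j := by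
  rcases lt_trichotomy j 0 with h | h | h
  · rw [gaussBinomZ_of_neg Q (n+1) h, gaussBinomZ_of_neg Q n (show j-1 < 0 by omega), gaussBinomZ_of_neg Q n h]; ring
  · subst h
    rw [gaussBinomZ_of_neg Q n (show (0:ℤ)-1 < 0 by norm_num),
      gaussBinomZ_eq_gb Q (n+1) (k := 0) (by norm_num), gaussBinomZ_eq_gb Q n (k := 0) (by norm_num),
      gb_zero_right, gb_zero_right, zpow_zero]
    ring
  · obtain ⟨k, rfl⟩ : ∃ k : ℕ, j = (k:ℤ)+1 := ⟨(j-1).toNat, by omega⟩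
    rw [gaussBinomZ_eq_gb Q (n+1) (k := k+1) (by omega),
      gaussBinomZ_eq_gb Q n (k := k) (by omega),
      gaussBinomZ_eq_gb Q n (j := (k:ℤ)+1) (k := k+1) (by omega),
      show Q ^ ((k:ℤ)+1) = Q ^ (k+1:ℕ) by rw [show ((k:ℤ)+1) = ((k+1:ℕ):ℤ) by omega, zpow_natCast],
      gb_succ_succ]

lemma gaussBinomZ_pascal2 (Q : K) (hQ : Q ≠ 0) (n : ℕ) (j : ℤ) :
    gaussBinomZ Q (n+1) j = Q ^ ((n:ℤ)+1-j) * gaussBinomZ Q n (j-1) + gaussBinomZ Q n j := by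
  rcases lt_trichotomy j 0 with h | h | h
  · rw [gaussBinomZ_of_neg Q (n+1) h, gaussBinomZ_of_neg Q n (show j-1 < 0 by omega), gaussBinomZ_of_neg Q n h]; ring
  · subst h
    rw [gaussBinomZ_of_neg Q n (show (0:ℤ)-1 < 0 by norm_num),
      gaussBinomZ_eq_gb Q (n+1) (k := 0) (by norm_num), gaussBinomZ_eq_gb Q n (k := 0) (by norm_num),
      gb_zero_right, gb_zero_right]
    ring
  · obtain ⟨k, rfl⟩ : ∃ k : ℕ, j = (k:ℤ)+1 := ⟨(j-1).toNat, by omega⟩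
    by_cases hk : k ≤ n
    · rw [gaussBinomZ_eq_gb Q (n+1) (k := k+1) (by omega),
        gaussBinomZ_eq_gb Q n (k := k) (by omega),
        gaussBinomZ_eq_gb Q n (j := (k:ℤ)+1) (k := k+1) (by omega),
        show Q ^ ((n:ℤ)+1-((k:ℤ)+1)) = Q ^ (n-k:ℕ) by rw [show ((n:ℤ)+1-((k:ℤ)+1)) = ((n-k:ℕ):ℤ) by omega, zpow_natCast],
        gb_pascal2]
    · rw [gaussBinomZ_eq_zero Q (show (n:ℤ)+1 < (k:ℤ)+1 by omega),
        gaussBinomZ_eq_zero Q (show (n:ℤ) < (k:ℤ)+1-1 by omega),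
        gaussBinomZ_eq_zero Q (show (n:ℤ) < (k:ℤ)+1 by omega)]
      ring

lemma gaussBinomZ_absorbC (Q : K) (hQ : Q ≠ 0) (n : ℕ) (j : ℤ) :
    (1 - Q ^ j) * gaussBinomZ Q (n+1) j = (1 - Q ^ ((n:ℤ)+1)) * gaussBinomZ Q n (j-1) := by
  rcases lt_trichotomy j 0 with h | h | h
  · rw [gaussBinomZ_of_neg Q (n+1) h, gaussBinomZ_of_neg Q n (show j-1 < 0 by omega)]; ring
  · subst h
    rw [gaussBinomZ_of_neg Q n (show (0:ℤ)-1 < 0 by norm_num), zpow_zero]; ring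
  · obtain ⟨k, rfl⟩ : ∃ k : ℕ, j = (k:ℤ)+1 := ⟨(j-1).toNat, by omega⟩
    rw [gaussBinomZ_eq_gb Q (n+1) (k := k+1) (by omega),
      gaussBinomZ_eq_gb Q n (k := k) (by omega),
      show Q ^ ((k:ℤ)+1) = Q ^ (k+1:ℕ) by rw [show ((k:ℤ)+1) = ((k+1:ℕ):ℤ) by omega, zpow_natCast],
      show Q ^ ((n:ℤ)+1) = Q ^ (n+1:ℕ) by rw [show ((n:ℤ)+1) = ((n+1:ℕ):ℤ) by omega, zpow_natCast]]
    exact gb_absorbC Q n k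

lemma gaussBinomZ_absorb' (Q : K) (hQ : Q ≠ 0) (M : ℕ) (j : ℤ) :
    (Q^(j-1) - Q^(2*j-1)) * gaussBinomZ Q M j = (Q^(j-1) - Q^(M:ℤ)) * gaussBinomZ Q M (j-1) := by
  rcases lt_trichotomy j 0 with h | h | h
  · rw [gaussBinomZ_of_neg Q M h, gaussBinomZ_of_neg Q M (show j-1 < 0 by omega)]; ring
  · subst h
    rw [gaussBinomZ_of_neg Q M (show (0:ℤ)-1 < 0 by norm_num)]
    norm_num
  · obtain ⟨k, rfl⟩ : ∃ k : ℕ, j = (k:ℤ)+1 := ⟨(j-1).toNat, by omega⟩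
    by_cases hk : k + 1 ≤ M
    · have h := gb_absorb Q M k
      rw [gaussBinomZ_eq_gb Q M (k := k+1) (by omega),
        gaussBinomZ_eq_gb Q M (k := k) (by omega),
        show Q ^ ((k:ℤ)+1-1) = Q ^ (k:ℕ) by rw [show ((k:ℤ)+1-1) = ((k:ℕ):ℤ) by omega, zpow_natCast],
        show Q ^ (2*((k:ℤ)+1)-1) = Q ^ (2*k+1:ℕ) by rw [show (2*((k:ℤ)+1)-1) = ((2*k+1:ℕ):ℤ) by omega, zpow_natCast],
        show Q ^ ((M:ℤ)) = Q ^ (M:ℕ) from zpow_natCast Q M]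
      have e4 : Q ^ (k:ℕ) * Q ^ (M - k:ℕ) = Q ^ (M:ℕ) := by
        rw [← pow_add]; congr 1; omega
      linear_combination Q^(k:ℕ) * h - gaussBinom Q M k * e4
    · rcases Nat.lt_or_ge M k with hM | hM
      · rw [gaussBinomZ_eq_zero Q (show (M:ℤ) < (k:ℤ)+1 by omega),
          gaussBinomZ_eq_zero Q (show (M:ℤ) < (k:ℤ)+1-1 by omega)]
        ring
      · have hMk : M = k := by omega
        rw [gaussBinomZ_eq_zero Q (show (M:ℤ) < (k:ℤ)+1 by omega),
          show ((k:ℤ)+1-1) = ((k:ℤ)) by ring, hMk]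
        ring


lemma qTrinom_eq (Q : K) (m : ℕ) (b a : ℤ) :
    qTrinom Q m b a
      = ∑ k ∈ range (m+1), Q ^ ((k:ℤ)*((k:ℤ)+b)) * gaussBinom Q m k * gaussBinomZ Q (m-k) ((k:ℤ)+a) := by
  refine Finset.sum_congr rfl fun k _ => ?_
  rw [gaussBinomZ]
  split_ifs with h
  · rfl
  · rw [mul_zero]

lemma qTrinom_rec (Q : K) (hQ : Q ≠ 0) (m : ℕ) (b a : ℤ) :
    qTrinom Q (m+1) b a
      = Q ^ ((m:ℤ)+1+b) * qTrinom Q m (b+1) (a+1)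
        + (Q ^ ((m:ℤ)+1-a) * qTrinom Q m (b-2) (a-1) + qTrinom Q m b a) := by
  rw [qTrinom_eq, qTrinom_eq, qTrinom_eq, qTrinom_eq]
  rw [Finset.sum_range_succ']
  -- define the "B" family
  have hsplit : ∀ k ∈ range (m+1),
      Q ^ (((k+1:ℕ):ℤ)*(((k+1:ℕ):ℤ)+b)) * gaussBinom Q (m+1) (k+1) * gaussBinomZ Q (m+1-(k+1)) (((k+1:ℕ):ℤ)+a)
      = Q ^ ((m:ℤ)+1+b) * (Q ^ ((k:ℤ)*((k:ℤ)+(b+1))) * gaussBinom Q m k * gaussBinomZ Q (m-k) ((k:ℤ)+(a+1)))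
        + Q ^ (((k+1:ℕ):ℤ)*(((k+1:ℕ):ℤ)+b)) * gaussBinom Q m (k+1) * gaussBinomZ Q (m+1-(k+1)) (((k+1:ℕ):ℤ)+a) := by
    intro k hk
    have hkm : k ≤ m := by simpa using Nat.lt_succ_iff.mp (mem_range.mp hk)
    rw [gb_pascal2]
    have e1 : Q ^ (((k+1:ℕ):ℤ)*(((k+1:ℕ):ℤ)+b)) * (Q ^ (m-k:ℕ))
        = Q ^ ((m:ℤ)+1+b) * Q ^ ((k:ℤ)*((k:ℤ)+(b+1))) := by
      rw [show (Q:K) ^ (m-k:ℕ) = Q ^ ((m:ℤ)-k) by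
            rw [show ((m:ℤ)-k) = ((m-k:ℕ):ℤ) by omega, zpow_natCast],
        ← zpow_add₀ hQ, ← zpow_add₀ hQ]
      congr 1
      push_cast
      ring
    have e2 : gaussBinomZ Q (m+1-(k+1)) (((k+1:ℕ):ℤ)+a) = gaussBinomZ Q (m-k) ((k:ℤ)+(a+1)) := by
      rw [Nat.succ_sub_succ]
      congr 1
      push_cast
      ring
    rw [e2]
    linear_combination (gaussBinom Q m k * gaussBinomZ Q (m-k) ((k:ℤ)+(a+1))) * e1
  rw [Finset.sum_congr rfl hsplit, Finset.sum_add_distrib, ← Finset.mul_sum, add_assoc]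
  congr 1
  -- now: ∑ B(k+1) + B0 = Q^{m+1-a} * S2 + S3
  have hzero : Q ^ (((0:ℕ):ℤ)*(((0:ℕ):ℤ)+b)) * gaussBinom Q (m+1) 0 * gaussBinomZ Q (m+1-0) (((0:ℕ):ℤ)+a)
      = Q ^ (((0:ℕ):ℤ)*(((0:ℕ):ℤ)+b)) * gaussBinom Q m 0 * gaussBinomZ Q (m+1-0) (((0:ℕ):ℤ)+a) := by
    rw [gb_zero_right, gb_zero_right]
  rw [hzero,
    ← Finset.sum_range_succ' (fun k => Q ^ ((k:ℤ)*((k:ℤ)+b)) * gaussBinom Q m k * gaussBinomZ Q (m+1-k) ((k:ℤ)+a)) (m+1),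
    Finset.sum_range_succ]
  rw [gb_eq_zero Q m (m+1) (by omega)]
  rw [mul_zero, zero_mul, add_zero]
  have hB : ∀ k ∈ range (m+1),
      Q ^ ((k:ℤ)*((k:ℤ)+b)) * gaussBinom Q m k * gaussBinomZ Q (m+1-k) ((k:ℤ)+a)
      = Q ^ ((m:ℤ)+1-a) * (Q ^ ((k:ℤ)*((k:ℤ)+(b-2))) * gaussBinom Q m k * gaussBinomZ Q (m-k) ((k:ℤ)+(a-1)))
        + Q ^ ((k:ℤ)*((k:ℤ)+b)) * gaussBinom Q m k * gaussBinomZ Q (m-k) ((k:ℤ)+a) := by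
    intro k hk
    have hkm : k ≤ m := by simpa using Nat.lt_succ_iff.mp (mem_range.mp hk)
    rw [show m+1-k = (m-k)+1 by omega, gaussBinomZ_pascal2 Q hQ (m-k) ((k:ℤ)+a)]
    have e3 : Q ^ ((k:ℤ)*((k:ℤ)+b)) * Q ^ (((m-k:ℕ):ℤ)+1-((k:ℤ)+a))
        = Q ^ ((m:ℤ)+1-a) * Q ^ ((k:ℤ)*((k:ℤ)+(b-2))) := by
      rw [← zpow_add₀ hQ, ← zpow_add₀ hQ]
      congr 1
      rw [show ((m-k:ℕ):ℤ) = (m:ℤ)-k by omega]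
      ring
    have e4 : gaussBinomZ Q (m-k) ((k:ℤ)+a-1) = gaussBinomZ Q (m-k) ((k:ℤ)+(a-1)) := by
      congr 1
      ring
    rw [e4]
    linear_combination (gaussBinom Q m k * gaussBinomZ Q (m-k) ((k:ℤ)+(a-1))) * e3
  rw [Finset.sum_congr rfl hB, Finset.sum_add_distrib, ← Finset.mul_sum]


lemma qTrinom_rc (Q : K) (hQ : Q ≠ 0) (m : ℕ) (c : ℤ) :
    qTrinom Q (m+1) (c-1) c
      = qTrinom Q (m+1) c c + Q^c * (1 - Q^((m:ℤ)+1)) * qTrinom Q m (c+1) (c+1) := by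
  rw [qTrinom_eq, qTrinom_eq, qTrinom_eq, ← sub_eq_iff_eq_add', ← Finset.sum_sub_distrib,
    Finset.sum_range_succ']
  have hsplit : ∀ k ∈ range (m+1),
      (Q ^ (((k+1:ℕ):ℤ)*(((k+1:ℕ):ℤ)+(c-1))) * gaussBinom Q (m+1) (k+1) * gaussBinomZ Q (m+1-(k+1)) (((k+1:ℕ):ℤ)+c)
       - Q ^ (((k+1:ℕ):ℤ)*(((k+1:ℕ):ℤ)+c)) * gaussBinom Q (m+1) (k+1) * gaussBinomZ Q (m+1-(k+1)) (((k+1:ℕ):ℤ)+c))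
      = Q^c * (1 - Q^((m:ℤ)+1)) * (Q ^ ((k:ℤ)*((k:ℤ)+(c+1))) * gaussBinom Q m k * gaussBinomZ Q (m-k) ((k:ℤ)+(c+1))) := by
    intro k hk
    have harg : gaussBinomZ Q (m+1-(k+1)) (((k+1:ℕ):ℤ)+c) = gaussBinomZ Q (m-k) ((k:ℤ)+(c+1)) := by
      rw [Nat.succ_sub_succ]
      congr 1
      push_cast
      ring
    have efac : Q ^ (((k+1:ℕ):ℤ)*(((k+1:ℕ):ℤ)+c))
        = Q ^ (((k+1:ℕ):ℤ)*(((k+1:ℕ):ℤ)+(c-1))) * Q ^ (k+1:ℕ) := by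
      rw [show (Q:K) ^ (k+1:ℕ) = Q ^ ((k+1:ℕ):ℤ) from (zpow_natCast Q (k+1)).symm,
        ← zpow_add₀ hQ]
      congr 1
      push_cast
      ring
    have e5 : Q ^ (((k+1:ℕ):ℤ)*(((k+1:ℕ):ℤ)+(c-1)))
        = Q ^ c * Q ^ ((k:ℤ)*((k:ℤ)+(c+1))) := by
      rw [← zpow_add₀ hQ]
      congr 1
      push_cast
      ring
    have habs := gb_absorbC Q m k
    rw [harg, efac, e5, show Q^((m:ℤ)+1) = Q^(m+1:ℕ) by
      rw [show ((m:ℤ)+1) = ((m+1:ℕ):ℤ) by omega, zpow_natCast]]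
    linear_combination (Q^c * Q^((k:ℤ)*((k:ℤ)+(c+1))) * gaussBinomZ Q (m-k) ((k:ℤ)+(c+1))) * habs
  rw [Finset.sum_congr rfl hsplit]
  have hzero : (Q ^ (((0:ℕ):ℤ)*(((0:ℕ):ℤ)+(c-1))) * gaussBinom Q (m+1) 0 * gaussBinomZ Q (m+1-0) (((0:ℕ):ℤ)+c)
       - Q ^ (((0:ℕ):ℤ)*(((0:ℕ):ℤ)+c)) * gaussBinom Q (m+1) 0 * gaussBinomZ Q (m+1-0) (((0:ℕ):ℤ)+c)) = 0 := by
    norm_num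
  rw [hzero, add_zero, ← Finset.mul_sum]


noncomputable def T1 (q : K) (m : ℕ) (c : ℤ) : K :=
  q ^ ((m : ℤ) ^ 2 - c ^ 2) * qTrinom ((q ^ 2)⁻¹) m (c-1) c

lemma Qi_ne (q : K) (hq : q ≠ 0) : ((q^2)⁻¹ : K) ≠ 0 := by
  simp [pow_ne_zero, hq]

lemma Qi_zpow (q : K) (hq : q ≠ 0) (z : ℤ) : ((q^2)⁻¹ : K) ^ z = q ^ (-(2*z)) := by
  rw [inv_zpow, ← zpow_neg, show (q:K)^2 = q^((2:ℕ):ℤ) by rw [zpow_natCast], ← zpow_mul]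
  congr 1
  ring

lemma qTrinom_zero_top (Q : K) (b b' a : ℤ) : qTrinom Q 0 b a = qTrinom Q 0 b' a := by
  simp [qTrinom]

lemma T0_ra (q : K) (hq : q ≠ 0) (m : ℕ) (a : ℤ) :
    T0 q (m+1) a = T0 q m (a+1) + T1 q m (a-1) + q^(2*(m:ℤ)+1) * T0 q m a := by
  rw [T0, T0, T0, T1, qTrinom_rec ((q^2)⁻¹) (Qi_ne q hq) m a a,
    show (a-1-1 : ℤ) = a-2 by ring,
    Qi_zpow q hq ((m:ℤ)+1+a), Qi_zpow q hq ((m:ℤ)+1-a)]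
  have c1 : q ^ (((m+1:ℕ):ℤ)^2 - a^2) * q ^ (-(2*((m:ℤ)+1+a)))
      = q ^ ((m:ℤ)^2 - (a+1)^2) := by
    rw [← zpow_add₀ hq]
    congr 1
    push_cast
    ring
  have c2 : q ^ (((m+1:ℕ):ℤ)^2 - a^2) * q ^ (-(2*((m:ℤ)+1-a)))
      = q ^ ((m:ℤ)^2 - (a-1)^2) := by
    rw [← zpow_add₀ hq]
    congr 1
    push_cast
    ring
  have c3 : q ^ (((m+1:ℕ):ℤ)^2 - a^2) = q^(2*(m:ℤ)+1) * q ^ ((m:ℤ)^2 - a^2) := by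
    rw [← zpow_add₀ hq]
    congr 1
    push_cast
    ring
  linear_combination (qTrinom ((q^2)⁻¹) m (a+1) (a+1)) * c1
    + (qTrinom ((q^2)⁻¹) m (a-2) (a-1)) * c2
    + (qTrinom ((q^2)⁻¹) m a a) * c3

lemma T1_eq (q : K) (hq : q ≠ 0) (m : ℕ) (c : ℤ) :
    T1 q (m+1) c = T0 q (m+1) c + (q^(2*(m:ℤ)+2) - 1) * T0 q m (c+1) := by
  rw [T1, T0, T0, qTrinom_rc ((q^2)⁻¹) (Qi_ne q hq) m c,
    Qi_zpow q hq c, Qi_zpow q hq ((m:ℤ)+1)]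
  have d1 : q ^ (((m+1:ℕ):ℤ)^2 - c^2) * q ^ (-(2*c))
      = q^(2*(m:ℤ)+2) * q ^ ((m:ℤ)^2 - (c+1)^2) := by
    rw [← zpow_add₀ hq, ← zpow_add₀ hq]
    congr 1
    push_cast
    ring
  have d2 : q ^ (((m+1:ℕ):ℤ)^2 - c^2) * q ^ (-(2*c)) * q ^ (-(2*((m:ℤ)+1)))
      = q ^ ((m:ℤ)^2 - (c+1)^2) := by
    rw [← zpow_add₀ hq, ← zpow_add₀ hq]
    congr 1
    push_cast
    ring
  linear_combination (qTrinom ((q^2)⁻¹) m (c+1) (c+1)) * d1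
    - (qTrinom ((q^2)⁻¹) m (c+1) (c+1)) * d2

lemma T0_rd (q : K) (hq : q ≠ 0) (m : ℕ) (a : ℤ) :
    T0 q (m+2) a = T0 q (m+1) (a+1) + T0 q (m+1) (a-1)
      + q^(2*(m:ℤ)+3) * T0 q (m+1) a + (q^(2*(m:ℤ)+2) - 1) * T0 q m a := by
  have h1 := T0_ra q hq (m+1) a
  have h2 := T1_eq q hq m (a-1)
  rw [show (a-1+1 : ℤ) = a by ring] at h2
  rw [show ((m+1:ℕ)+1) = m+2 by omega] at h1
  rw [show (2*((m+1:ℕ):ℤ)+1) = 2*(m:ℤ)+3 by push_cast; ring] at h1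
  rw [h1, h2]
  ring

lemma T0_rd0 (q : K) (hq : q ≠ 0) (a : ℤ) :
    T0 q 1 a = T0 q 0 (a+1) + T0 q 0 (a-1) + q * T0 q 0 a := by
  have h1 := T0_ra q hq 0 a
  have h0 : T1 q 0 (a-1) = T0 q 0 (a-1) := by
    rw [T1, T0, qTrinom_zero_top ((q^2)⁻¹) (a-1-1) (a-1) (a-1)]
  rw [show (2*((0:ℕ):ℤ)+1) = 1 by norm_num] at h1
  rw [h1, h0, zpow_one]

noncomputable def Ssum (q : K) (d L : ℕ) (a : ℤ) : K :=
  ∑ i ∈ range (L+1), q^((i:ℤ)^2) * gaussBinom (q^2) L i * T0 q (i+d) a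

lemma Ssum_step (q : K) (hq : q ≠ 0) (d L : ℕ) (a : ℤ) :
    Ssum q d (L+1) a = Ssum q d L a + q^(2*(L:ℤ)+1) * Ssum q (d+1) L a := by
  rw [Ssum, Ssum, Ssum, Finset.sum_range_succ']
  have hsplit : ∀ i ∈ range (L+1),
      q^(((i+1:ℕ):ℤ)^2) * gaussBinom (q^2) (L+1) (i+1) * T0 q (i+1+d) a
      = q^(2*(L:ℤ)+1) * (q^((i:ℤ)^2) * gaussBinom (q^2) L i * T0 q (i+(d+1)) a)
        + q^(((i+1:ℕ):ℤ)^2) * gaussBinom (q^2) L (i+1) * T0 q (i+1+d) a := by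
    intro i hi
    have hiL : i ≤ L := by simpa using Nat.lt_succ_iff.mp (mem_range.mp hi)
    rw [gb_pascal2, show i+1+d = i+(d+1) by omega]
    have e1 : q^(((i+1:ℕ):ℤ)^2) * ((q^2)^(L-i:ℕ)) = q^(2*(L:ℤ)+1) * q^((i:ℤ)^2) := by
      rw [show ((q:K)^2)^(L-i:ℕ) = q^(2*(L-i):ℕ) from (pow_mul q 2 (L-i)).symm,
        show (q:K)^(2*(L-i):ℕ) = q^((2*(L-i):ℕ):ℤ) from (zpow_natCast q (2*(L-i))).symm,
        ← zpow_add₀ hq, ← zpow_add₀ hq]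
      congr 1
      rw [show ((2*(L-i):ℕ):ℤ) = 2*((L:ℤ)-i) by omega]
      push_cast
      ring
    linear_combination (gaussBinom (q^2) L i * T0 q (i+(d+1)) a) * e1
  rw [Finset.sum_congr rfl hsplit, Finset.sum_add_distrib, ← Finset.mul_sum]
  have hzero : q^(((0:ℕ):ℤ)^2) * gaussBinom (q^2) (L+1) 0 * T0 q (0+d) a
      = q^(((0:ℕ):ℤ)^2) * gaussBinom (q^2) L 0 * T0 q (0+d) a := by
    rw [gb_zero_right, gb_zero_right]
  rw [add_assoc, hzero,
    ← Finset.sum_range_succ' (fun i => q^((i:ℤ)^2) * gaussBinom (q^2) L i * T0 q (i+d) a) (L+1),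
    Finset.sum_range_succ (fun i => q^((i:ℤ)^2) * gaussBinom (q^2) L i * T0 q (i+d) a) (L+1),
    gb_eq_zero (q^2) L (L+1) (by omega)]
  ring

lemma Ssum0_succ (q : K) (hq : q ≠ 0) (L : ℕ) (a : ℤ) :
    Ssum q 0 (L+1) a
      = (∑ i ∈ range (L+1), q^(((i+1:ℕ):ℤ)^2) * gaussBinom (q^2) L i * T0 q (i+1) a)
        + ∑ i ∈ range (L+1), q^((i:ℤ)^2) * (q^2)^i * gaussBinom (q^2) L i * T0 q (i+0) a := by
  rw [Ssum, Finset.sum_range_succ']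
  have hsplit : ∀ i ∈ range (L+1),
      q^(((i+1:ℕ):ℤ)^2) * gaussBinom (q^2) (L+1) (i+1) * T0 q (i+1+0) a
      = q^(((i+1:ℕ):ℤ)^2) * gaussBinom (q^2) L i * T0 q (i+1) a
        + q^(((i+1:ℕ):ℤ)^2) * (q^2)^(i+1) * gaussBinom (q^2) L (i+1) * T0 q (i+1+0) a := by
    intro i hi
    rw [gb_succ_succ, show i+1+0 = i+1 by omega]
    ring
  rw [Finset.sum_congr rfl hsplit, Finset.sum_add_distrib]
  have hzero : q^(((0:ℕ):ℤ)^2) * gaussBinom (q^2) (L+1) 0 * T0 q (0+0) a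
      = q^(((0:ℕ):ℤ)^2) * (q^2)^(0:ℕ) * gaussBinom (q^2) L 0 * T0 q (0+0) a := by
    rw [gb_zero_right, gb_zero_right, pow_zero]
    ring
  rw [add_assoc, hzero,
    ← Finset.sum_range_succ' (fun i => q^((i:ℤ)^2) * (q^2)^i * gaussBinom (q^2) L i * T0 q (i+0) a) (L+1),
    Finset.sum_range_succ (fun i => q^((i:ℤ)^2) * (q^2)^i * gaussBinom (q^2) L i * T0 q (i+0) a) (L+1),
    gb_eq_zero (q^2) L (L+1) (by omega)]
  ring

lemma Ssum_two (q : K) (hq : q ≠ 0) (L : ℕ) (a : ℤ) :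
    Ssum q 2 L a + Ssum q 0 L a
      = Ssum q 1 L (a+1) + (Ssum q 1 L (a-1) + q^(2:ℕ) * Ssum q 0 (L+1) a) := by
  rw [Ssum0_succ q hq L a, Ssum, Ssum, Ssum, Ssum, mul_add, Finset.mul_sum, Finset.mul_sum,
    ← Finset.sum_add_distrib, ← Finset.sum_add_distrib, ← Finset.sum_add_distrib,
    ← Finset.sum_add_distrib]
  refine Finset.sum_congr rfl fun i _ => ?_
  have hrd := T0_rd q hq i a
  have p1 : q^((i:ℤ)^2) * q^(2*(i:ℤ)+3) = q^(2:ℕ) * q^(((i+1:ℕ):ℤ)^2) := by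
    rw [show (q:K)^(2:ℕ) = q^((2:ℕ):ℤ) from (zpow_natCast q 2).symm,
      ← zpow_add₀ hq, ← zpow_add₀ hq]
    congr 1
    push_cast
    ring
  have p2 : q^((i:ℤ)^2) * q^(2*(i:ℤ)+2) = q^(2:ℕ) * (q^((i:ℤ)^2) * (q^2)^(i:ℕ)) := by
    rw [show ((q:K)^2)^(i:ℕ) = q^(2*i:ℕ) from (pow_mul q 2 i).symm,
      show (q:K)^(2*i:ℕ) = q^((2*i:ℕ):ℤ) from (zpow_natCast q (2*i)).symm,
      show (q:K)^(2:ℕ) = q^((2:ℕ):ℤ) from (zpow_natCast q 2).symm,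
      ← zpow_add₀ hq, ← zpow_add₀ hq, ← zpow_add₀ hq]
    congr 1
    push_cast
    ring
  rw [show i+2 = (i+1)+1 by omega] at *
  rw [show i+0 = i by omega]
  calc q^((i:ℤ)^2) * gaussBinom (q^2) L i * T0 q ((i+1)+1) a
        + q^((i:ℤ)^2) * gaussBinom (q^2) L i * T0 q i a
      = q^((i:ℤ)^2) * gaussBinom (q^2) L i
          * (T0 q (i+1) (a+1) + T0 q (i+1) (a-1)
            + q^(2*(i:ℤ)+3) * T0 q (i+1) a + (q^(2*(i:ℤ)+2) - 1) * T0 q i a)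
        + q^((i:ℤ)^2) * gaussBinom (q^2) L i * T0 q i a := by
        rw [show T0 q ((i+1)+1) a = T0 q (i+1) (a+1) + T0 q (i+1) (a-1)
            + q^(2*(i:ℤ)+3) * T0 q (i+1) a + (q^(2*(i:ℤ)+2) - 1) * T0 q i a from hrd]
    _ = _ := by
        rw [show i+1+0 = i+1 by omega]
        linear_combination (gaussBinom (q^2) L i * T0 q (i+1) a) * p1
          + (gaussBinom (q^2) L i * T0 q i a) * p2

lemma gaussBinomZ_pascal_two (Q : K) (hQ : Q ≠ 0) (M : ℕ) (j : ℤ) :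
    gaussBinomZ Q (M+2) j = gaussBinomZ Q M (j-2) + (Q^(j-1) + Q^j) * gaussBinomZ Q M (j-1) + Q^(2*j) * gaussBinomZ Q M j := by
  rw [show M+2 = (M+1)+1 by omega, gaussBinomZ_pascal1 Q hQ (M+1) j, gaussBinomZ_pascal1 Q hQ M (j-1),
    gaussBinomZ_pascal1 Q hQ M j, show (j-1-1 : ℤ) = j-2 by ring]
  have h2 : Q^j * Q^j = Q^(2*j) := by
    rw [← zpow_add₀ hQ]
    congr 1
    ring
  linear_combination (gaussBinomZ Q M j) * h2

/-- The key Gaussian-binomial identity, in "cleared" form (multiplied by `Q^(m-2)`). -/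
lemma keyB (Q : K) (hQ : Q ≠ 0) (M : ℕ) (m : ℤ) :
    Q^(m-2) * (gaussBinomZ Q (M+4) (m+2) - gaussBinomZ Q (M+2) (m+1))
      = Q^(m-1) * (gaussBinomZ Q (M+2) (m+1) - gaussBinomZ Q M m)
        + Q^(M:ℤ) * (gaussBinomZ Q (M+2) m - gaussBinomZ Q M (m-1))
        + Q^(2*m) * (gaussBinomZ Q (M+2) (m+2) - gaussBinomZ Q M (m+1))
        + Q^(m+(M:ℤ)) * (Q - 1) * gaussBinomZ Q M m
        + Q^(m+1+(M:ℤ)) * (gaussBinomZ Q (M+2) (m+1) - gaussBinomZ Q M m) := by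
  -- atoms
  set A := Q^(m-2) with hA
  set Z := Q^(M:ℤ) with hZ
  -- convert all zpow exponents to A/Z monomials
  have hA2 : A^2 = Q^(2*(m-2)) := by
    rw [hA, ← zpow_natCast (Q^(m-2)) 2, ← zpow_mul]
    congr 1
    ring
  have hA3 : A^3 = Q^(3*(m-2)) := by
    rw [hA, ← zpow_natCast (Q^(m-2)) 3, ← zpow_mul]
    congr 1
    ring
  have hp : ∀ (x : ℤ) (n : ℕ), x = (m-2) + n → Q ^ x = A * Q^n := by
    intro x n hx
    rw [hx, zpow_add₀ hQ, hA, zpow_natCast Q n]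
  have hpz : ∀ (x : ℤ) (n : ℕ), x = (m-2) + (M:ℤ) + n → Q ^ x = A * Z * Q^n := by
    intro x n hx
    rw [hx, zpow_add₀ hQ, zpow_add₀ hQ, hA, hZ, zpow_natCast Q n]
  have hp2 : ∀ (x : ℤ) (n : ℕ), x = 2*(m-2) + n → Q ^ x = A^2 * Q^n := by
    intro x n hx
    rw [hx, zpow_add₀ hQ, hA2, zpow_natCast Q n]
  have hp3 : ∀ (x : ℤ) (n : ℕ), x = 3*(m-2) + n → Q ^ x = A^3 * Q^n := by
    intro x n hx
    rw [hx, zpow_add₀ hQ, hA3, zpow_natCast Q n]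
  -- two-step Pascal instances
  have ts0 := gaussBinomZ_pascal_two Q hQ M m
  have ts1 := gaussBinomZ_pascal_two Q hQ M (m+1)
  have ts2 := gaussBinomZ_pascal_two Q hQ M (m+2)
  have ts4 := gaussBinomZ_pascal_two Q hQ (M+2) (m+2)
  rw [show (M+2)+2 = M+4 by omega] at ts4
  -- absorption instances
  have r0 := gaussBinomZ_absorb' Q hQ M (m-1)
  have r1 := gaussBinomZ_absorb' Q hQ M m
  have r2 := gaussBinomZ_absorb' Q hQ M (m+1)
  have r3 := gaussBinomZ_absorb' Q hQ M (m+2)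
  -- normalize index arithmetic inside the hypotheses
  rw [show (m+1-2 : ℤ) = m-1 by ring, show (m+1-1 : ℤ) = m by ring] at ts1
  rw [show (m+2-2 : ℤ) = m by ring, show (m+2-1 : ℤ) = m+1 by ring] at ts2 ts4
  rw [show (m-1-1 : ℤ) = m-2 by ring] at r0
  rw [show (m+1-1 : ℤ) = m by ring] at r2
  rw [show (m+2-1 : ℤ) = m+1 by ring] at r3
  -- rewrite all powers
  rw [hp (m-1) 1 (by ring), hp2 (2*m) 4 (by ring), hpz (m+(M:ℤ)) 2 (by ring),
    hpz (m+1+(M:ℤ)) 3 (by ring)]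
  rw [hp (m-1) 1 (by ring), hp m 2 (by ring), hp2 (2*m) 4 (by ring)] at ts0
  rw [hp m 2 (by ring), hp (m+1) 3 (by ring), hp2 (2*(m+1)) 6 (by ring)] at ts1
  rw [hp (m+1) 3 (by ring), hp (m+2) 4 (by ring), hp2 (2*(m+2)) 8 (by ring)] at ts2 ts4
  rw [hp (m-2) 0 (by ring), hp2 (2*(m-1)-1) 1 (by ring), ← hZ] at r0
  rw [hp (m-1) 1 (by ring), hp2 (2*m-1) 3 (by ring), ← hZ] at r1
  rw [hp m 2 (by ring), hp2 (2*(m+1)-1) 5 (by ring), ← hZ] at r2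
  rw [hp (m+1) 3 (by ring), hp2 (2*(m+2)-1) 7 (by ring), ← hZ] at r3
  rw [ts4, ts0, ts1, ts2]
  linear_combination (-1 : K) * r0
    + (1 - A*(Q+Q^2+Q^3)) * r1
    + (A*Q^2 - A^2*(Q^4+Q^5+Q^6)) * r2
    + (- A^3*Q^9) * r3

lemma T0_zero (q : K) (hq : q ≠ 0) (c : ℤ) :
    T0 q 0 c = if c = 0 then 1 else 0 := by
  rw [T0, qTrinom]
  rw [Finset.sum_range_one]
  rcases lt_trichotomy c 0 with h | h | h
  · rw [if_neg (by omega), if_neg (by omega), mul_zero]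
  · subst h
    norm_num [gb_zero_right]
  · rw [if_pos (by omega), if_neg (by omega), gb_zero_right,
      gb_eq_zero _ (0-0) ((((0:ℕ):ℤ)+c).toNat) (by omega)]
    ring

lemma stepB (q : K) (hq : q ≠ 0) (L : ℕ) (a : ℤ) :
    q^(a^2) * (gaussBinomZ (q^2) (2*L+4) ((L:ℤ)+2-a) - gaussBinomZ (q^2) (2*L+2) ((L:ℤ)+1-a))
      = q^(2:ℕ) * (q^(a^2) * (gaussBinomZ (q^2) (2*L+2) ((L:ℤ)+1-a) - gaussBinomZ (q^2) (2*L) ((L:ℤ)-a)))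
        + q^(2*L+3:ℕ) * (q^((a+1)^2) * (gaussBinomZ (q^2) (2*L+2) ((L:ℤ)-a) - gaussBinomZ (q^2) (2*L) ((L:ℤ)-a-1))
           + q^((a-1)^2) * (gaussBinomZ (q^2) (2*L+2) ((L:ℤ)+2-a) - gaussBinomZ (q^2) (2*L) ((L:ℤ)+1-a)))
        - q^(4*L+4:ℕ) * (q^(a^2) * gaussBinomZ (q^2) (2*L) ((L:ℤ)-a))
        + q^(4*L+6:ℕ) * (q^(a^2) * gaussBinomZ (q^2) (2*L+2) ((L:ℤ)+1-a)) := by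
  have hq2 : ((q:K)^2) ≠ 0 := pow_ne_zero 2 hq
  have kb := keyB (q^2) hq2 (2*L) ((L:ℤ)-a)
  rw [show ((L:ℤ)-a+2) = (L:ℤ)+2-a by ring, show ((L:ℤ)-a+1) = (L:ℤ)+1-a by ring] at kb
  set A := ((q:K)^2)^((L:ℤ)-a-2) with hA
  set W := ((q:K)^2)^(((2*L:ℕ)):ℤ) with hW
  set P := (q:K)^(a^2) with hP
  have hA2 : A^2 = ((q:K)^2)^(2*((L:ℤ)-a-2)) := by
    rw [hA, ← zpow_natCast (((q:K)^2)^((L:ℤ)-a-2)) 2, ← zpow_mul]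
    congr 1
    ring
  have hp : ∀ (x : ℤ) (n : ℕ), x = ((L:ℤ)-a-2) + n → ((q:K)^2) ^ x = A * ((q:K)^2)^n := by
    intro x n hx
    rw [hx, zpow_add₀ hq2, hA, zpow_natCast]
  have hp2 : ∀ (x : ℤ) (n : ℕ), x = 2*((L:ℤ)-a-2) + n → ((q:K)^2) ^ x = A^2 * ((q:K)^2)^n := by
    intro x n hx
    rw [hx, zpow_add₀ hq2, hA2, zpow_natCast]
  have hpw : ∀ (x : ℤ) (n : ℕ), x = ((L:ℤ)-a-2) + ((2*L:ℕ):ℤ) + n →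
      ((q:K)^2) ^ x = A * W * ((q:K)^2)^n := by
    intro x n hx
    rw [hx, zpow_add₀ hq2, zpow_add₀ hq2, hA, hW, zpow_natCast ((q:K)^2) n]
  rw [hp ((L:ℤ)-a-1) 1 (by ring), hp2 (2*((L:ℤ)-a)) 4 (by ring),
    hpw ((L:ℤ)-a+((2*L:ℕ):ℤ)) 2 (by push_cast; ring),
    hpw ((L:ℤ)+1-a+((2*L:ℕ):ℤ)) 3 (by push_cast; ring)] at kb
  -- power facts relating the two spellings
  have conv : ∀ (x : ℤ) (y : ℤ), 2*x = y → ((q:K)^2)^x = q^y := by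
    intro x y hxy
    subst hxy
    rw [show ((q:K)^2) = q^((2:ℕ):ℤ) by rw [zpow_natCast], ← zpow_mul]
    norm_num
  have eP : A * (q^(2*L+3:ℕ) * q^((a+1)^2)) = P * W := by
    rw [hA, hP, hW, conv ((L:ℤ)-a-2) (2*((L:ℤ)-a-2)) rfl,
      conv (((2*L:ℕ)):ℤ) (2*((2*L:ℕ):ℤ)) rfl,
      show (q:K)^(2*L+3:ℕ) = q^((2*L+3:ℕ):ℤ) from (zpow_natCast q (2*L+3)).symm,
      ← zpow_add₀ hq, ← zpow_add₀ hq, ← zpow_add₀ hq]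
    all_goals (congr 1; push_cast; ring)
  have eM : A * (q^(2*L+3:ℕ) * q^((a-1)^2)) = P * (A^2 * ((q:K)^2)^(4:ℕ)) := by
    rw [hA, hP, hA2, conv ((L:ℤ)-a-2) (2*((L:ℤ)-a-2)) rfl,
      conv (2*((L:ℤ)-a-2)) (4*((L:ℤ)-a-2)) (by ring),
      show (((q:K)^2))^(4:ℕ) = q^(8:ℕ) by ring,
      show (q:K)^(2*L+3:ℕ) = q^((2*L+3:ℕ):ℤ) from (zpow_natCast q (2*L+3)).symm,
      show (q:K)^(8:ℕ) = q^((8:ℕ):ℤ) from (zpow_natCast q 8).symm,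
      ← zpow_add₀ hq, ← zpow_add₀ hq, ← zpow_add₀ hq, ← zpow_add₀ hq]
    all_goals (congr 1; push_cast; ring)
  have e4 : (q:K)^(4*L+4:ℕ) = W * ((q:K)^2)^(2:ℕ) := by
    rw [hW, conv (((2*L:ℕ)):ℤ) (2*((2*L:ℕ):ℤ)) rfl,
      show (((q:K)^2))^(2:ℕ) = q^(4:ℕ) by ring,
      show (q:K)^(4*L+4:ℕ) = q^((4*L+4:ℕ):ℤ) from (zpow_natCast q (4*L+4)).symm,
      show (q:K)^(4:ℕ) = q^((4:ℕ):ℤ) from (zpow_natCast q 4).symm,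
      ← zpow_add₀ hq]
    all_goals (congr 1; push_cast; ring)
  have e6 : (q:K)^(4*L+6:ℕ) = W * ((q:K)^2)^(3:ℕ) := by
    rw [hW, conv (((2*L:ℕ)):ℤ) (2*((2*L:ℕ):ℤ)) rfl,
      show (((q:K)^2))^(3:ℕ) = q^(6:ℕ) by ring,
      show (q:K)^(4*L+6:ℕ) = q^((4*L+6:ℕ):ℤ) from (zpow_natCast q (4*L+6)).symm,
      show (q:K)^(6:ℕ) = q^((6:ℕ):ℤ) from (zpow_natCast q 6).symm,
      ← zpow_add₀ hq]
    all_goals (congr 1; push_cast; ring)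
  refine mul_left_cancel₀ (show A ≠ 0 from zpow_ne_zero _ hq2) ?_
  linear_combination P * kb
    - (gaussBinomZ ((q:K)^2) (2*L+2) ((L:ℤ)-a) - gaussBinomZ ((q:K)^2) (2*L) ((L:ℤ)-a-1)) * eP
    - (gaussBinomZ ((q:K)^2) (2*L+2) ((L:ℤ)+2-a) - gaussBinomZ ((q:K)^2) (2*L) ((L:ℤ)+1-a)) * eM
    + (A * P * gaussBinomZ ((q:K)^2) (2*L) ((L:ℤ)-a)) * e4
    - (A * P * gaussBinomZ ((q:K)^2) (2*L+2) ((L:ℤ)+1-a)) * e6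

lemma gb_two_one (Q : K) : gaussBinom Q 2 1 = 1 + Q := by
  rw [show (2:ℕ) = 1+1 by rfl, gb_succ_succ, gb_succ_succ, gb_zero_right, gb_zero_right,
    gb_eq_zero Q 0 1 (by omega)]
  ring

lemma gb_two_two (Q : K) : gaussBinom Q 2 2 = 1 := by
  rw [show (2:ℕ) = 1+1 by rfl, gb_succ_succ, gb_succ_succ, gb_zero_right,
    gb_eq_zero Q 0 1 (by omega), gb_eq_zero Q 1 (1+1) (by omega)]
  ring

lemma base0 (q : K) (hq : q ≠ 0) (a : ℤ) :
    Ssum q 0 0 a = q^(a^2) * gaussBinomZ (q^2) (2*0) ((0:ℤ)-a) := by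
  rw [Ssum, Finset.sum_range_one, gb_zero_right, T0_zero q hq a]
  rcases lt_trichotomy a 0 with h | h | h
  · rw [if_neg (by omega), gaussBinomZ_eq_zero (q^2) (by simpa using h)]
    ring
  · subst h
    rw [gaussBinomZ_eq_gb (q^2) 0 (k := 0) (by norm_num), gb_zero_right]
    norm_num
  · rw [if_neg (by omega), gaussBinomZ_of_neg (q^2) 0 (by omega)]
    ring

lemma base1 (q : K) (hq : q ≠ 0) (a : ℤ) :
    q^(2*0+1:ℕ) * Ssum q 1 0 a
      = q^(a^2) * (gaussBinomZ (q^2) (2*0+2) ((0:ℤ)+1-a) - gaussBinomZ (q^2) (2*0) ((0:ℤ)-a)) := by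
  have h1 : Ssum q 1 0 a = T0 q 1 a := by
    rw [Ssum, Finset.sum_range_one, gb_zero_right]
    norm_num
  rw [h1, T0_rd0 q hq a, T0_zero q hq (a+1), T0_zero q hq (a-1), T0_zero q hq a]
  by_cases h0 : a = 0
  · subst h0
    rw [if_neg (by omega), if_neg (by omega), if_pos rfl]
    rw [show ((0:ℤ)+1-0) = ((1:ℕ):ℤ) by norm_num, show ((0:ℤ)-0) = ((0:ℕ):ℤ) by norm_num,
      gaussBinomZ_eq_gb (q^2) 2 (k := 1) rfl, gaussBinomZ_eq_gb (q^2) 0 (k := 0) rfl,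
      gb_two_one, gb_zero_right]
    have : (q:K)^((0:ℤ)^2) = 1 := by norm_num
    rw [this]
    ring
  · by_cases hp1 : a = 1
    · subst hp1
      rw [if_neg (by omega), if_pos (by norm_num), if_neg (by omega)]
      rw [show ((0:ℤ)+1-1) = ((0:ℕ):ℤ) by norm_num, gaussBinomZ_eq_gb (q^2) 2 (k := 0) rfl,
        gaussBinomZ_of_neg (q^2) 0 (by norm_num), gb_zero_right]
      have : (q:K)^((1:ℤ)^2) = q := by norm_num
      rw [this]
      ring
    · by_cases hm1 : a = -1
      · subst hm1
        rw [if_pos (by norm_num), if_neg (by omega), if_neg (by omega)]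
        rw [show ((0:ℤ)+1-(-1)) = ((2:ℕ):ℤ) by norm_num, show ((0:ℤ)-(-1)) = ((1:ℕ):ℤ) by norm_num,
          gaussBinomZ_eq_gb (q^2) 2 (k := 2) rfl, gaussBinomZ_eq_gb (q^2) 0 (k := 1) rfl,
          gb_two_two, gb_eq_zero (q^2) 0 1 (by omega)]
        have : (q:K)^(((-1):ℤ)^2) = q := by norm_num
        rw [this]
        ring
      · rw [if_neg (by omega), if_neg (by omega), if_neg (by omega)]
        rcases lt_trichotomy a 0 with h | h | h
        · rw [gaussBinomZ_eq_zero (q^2) (show ((2*0+2:ℕ):ℤ) < (0:ℤ)+1-a by push_cast; omega),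
            gaussBinomZ_eq_zero (q^2) (show ((2*0:ℕ):ℤ) < (0:ℤ)-a by push_cast; omega)]
          ring
        · exact absurd h h0
        · rw [gaussBinomZ_of_neg (q^2) _ (show (0:ℤ)+1-a < 0 by omega),
            gaussBinomZ_of_neg (q^2) _ (show (0:ℤ)-a < 0 by omega)]
          ring

theorem main_pair (q : K) (hq : q ≠ 0) :
    ∀ L : ℕ, ∀ a : ℤ,
      (Ssum q 0 L a = q^(a^2) * gaussBinomZ (q^2) (2*L) ((L:ℤ)-a)) ∧
      (q^(2*L+1:ℕ) * Ssum q 1 L a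
        = q^(a^2) * (gaussBinomZ (q^2) (2*L+2) ((L:ℤ)+1-a) - gaussBinomZ (q^2) (2*L) ((L:ℤ)-a))) := by
  intro L
  induction L with
  | zero =>
    intro a
    exact ⟨by simpa using base0 q hq a, by simpa using base1 q hq a⟩
  | succ L IH =>
    intro a
    have hnz : (q:K)^(2*(L:ℤ)+1) = q^(2*L+1:ℕ) := by
      rw [show (2*(L:ℤ)+1) = ((2*L+1:ℕ):ℤ) by omega, zpow_natCast]
    have ih1 := (IH a).1
    have ih2 := (IH a).2
    have ih2p := (IH (a+1)).2
    have ih2m := (IH (a-1)).2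
    rw [show (L:ℤ)+1-(a+1) = (L:ℤ)-a by ring, show (L:ℤ)-(a+1) = (L:ℤ)-a-1 by ring] at ih2p
    rw [show (L:ℤ)+1-(a-1) = (L:ℤ)+2-a by ring, show (L:ℤ)-(a-1) = (L:ℤ)+1-a by ring] at ih2m
    have hfst : Ssum q 0 (L+1) a = q^(a^2) * gaussBinomZ (q^2) (2*L+2) ((L:ℤ)+1-a) := by
      rw [Ssum_step q hq 0 L a]
      linear_combination (Ssum q 1 L a) * hnz + ih1 + ih2
    constructor
    · rw [show 2*(L+1) = 2*L+2 by ring, show ((L+1:ℕ):ℤ)-a = (L:ℤ)+1-a by push_cast; ring]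
      exact hfst
    · rw [show ((L+1:ℕ):ℤ)+1-a = (L:ℤ)+2-a by push_cast; ring,
        show ((L+1:ℕ):ℤ)-a = (L:ℤ)+1-a by push_cast; ring,
        show 2*(L+1)+2 = 2*L+4 by ring, show 2*(L+1) = 2*L+2 by ring,
        Ssum_step q hq 1 L a]
      have F2 := Ssum_two q hq L a
      have SB := stepB q hq L a
      linear_combination (q^(2*(L+1)+1:ℕ) * Ssum q 2 L a) * hnz
        + (q^(4*L+4:ℕ)) * F2 + (q^(2*L+3:ℕ)) * ih2p + (q^(2*L+3:ℕ)) * ih2m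
        - (q^(4*L+4:ℕ)) * ih1 + (q^(4*L+6:ℕ)) * hfst + (q^(2:ℕ)) * ih2 - SB


end WarnaarProof

/-- Warnaar's summation formula:
`Σ_{i≥0} q^{i²/2} [L choose i]_q T₀⟨i; q | a⟩ = q^{a²/2} [2L choose L-a]_q`,
stated with `q ↦ q²` to avoid half-integer powers. -/
theorem warnaar_T0_summation {K : Type*} [Field K] (q : K) (hq : q ≠ 0)
    (L : ℕ) (a : ℤ) :
    ∑ i ∈ range (L + 1), q ^ ((i : ℤ) ^ 2) * gaussBinom (q ^ 2) L i * T0 q i a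
      = q ^ (a ^ 2) * gaussBinomZ (q ^ 2) (2 * L) ((L : ℤ) - a) := by
  have h := (main_pair q hq L a).1
  rw [Ssum] at h
  simpa using h
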